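/- arXiv:2112.04183 — 2 statements merged into one kernel-verified Lean document; each statement's English description precedes it below -/
import Mathlib

section
/- A digraph G is a directed co-graph if and only if G can be constructed recursively from single vertices by taking disjoint unions and adding directed twins (where adding a directed twin of a vertex x means adding a new vertex y with N⁻(y)\{x} = N⁻(x)\{y} and N⁺(y)\{x} = N⁺(x)\{y}, with any of the four possible adjacency patterns between x and y: no arcs, arc (x,y) only, arc (y,x) only, or both arcs). -/
/-- Arc relation of the induced subdigraph on a vertex set `S`. -/
def restrict (A : ℕ → ℕ → Prop) (S : Finset ℕ) : ℕ → ℕ → Prop :=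
  fun x y => A x y ∧ x ∈ S ∧ y ∈ S

/-- `walkLen A n u v`: there is a directed walk of length `n` from `u` to `v`. -/
def walkLen (A : ℕ → ℕ → Prop) : ℕ → ℕ → ℕ → Prop
  | 0, u, v => u = v
  | n + 1, u, v => ∃ w, A u w ∧ walkLen A n w v

/-- `v` is reachable from `u` by a directed walk. -/
def Reach (A : ℕ → ℕ → Prop) (u v : ℕ) : Prop :=
  ∃ n, walkLen A n u v

/-- Directed distance: length of a shortest directed walk (= shortest directed path). -/
noncomputable def ddist (A : ℕ → ℕ → Prop) (u v : ℕ) : ℕ :=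
  sInf {n | walkLen A n u v}

/-- `x` and `y` are directed twins: `N⁻(x)\{y} = N⁻(y)\{x}` and `N⁺(x)\{y} = N⁺(y)\{x}`. -/
def DTwins (A : ℕ → ℕ → Prop) (x y : ℕ) : Prop :=
  x ≠ y ∧
    {w | A w x} \ {y} = {w | A w y} \ {x} ∧
    {w | A x w} \ {y} = {w | A y w} \ {x}

/-- The arc relation obtained by adding a new vertex `u` as a directed twin of `v`;
`auv`, `avu` determine which of the arcs `(u,v)`, `(v,u)` are present (any of the
four adjacency patterns between the twins). -/
def twinArc (A : ℕ → ℕ → Prop) (v u : ℕ) (auv avu : Prop) : ℕ → ℕ → Prop :=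
  fun x y => A x y ∨ (x = u ∧ y = v ∧ auv) ∨ (x = v ∧ y = u ∧ avu) ∨
    (x = u ∧ A v y) ∨ (y = u ∧ A x v)

/-- Directed co-graphs: single vertices, disjoint union, series and order composition. -/
inductive DCo : Finset ℕ → (ℕ → ℕ → Prop) → Prop
  | single (v : ℕ) : DCo {v} (fun _ _ => False)
  | union {V₁ V₂ : Finset ℕ} {A₁ A₂ : ℕ → ℕ → Prop} :
      Disjoint V₁ V₂ → DCo V₁ A₁ → DCo V₂ A₂ →
      DCo (V₁ ∪ V₂) (fun x y => A₁ x y ∨ A₂ x y)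
  | series {V₁ V₂ : Finset ℕ} {A₁ A₂ : ℕ → ℕ → Prop} :
      Disjoint V₁ V₂ → DCo V₁ A₁ → DCo V₂ A₂ →
      DCo (V₁ ∪ V₂)
        (fun x y => A₁ x y ∨ A₂ x y ∨ (x ∈ V₁ ∧ y ∈ V₂) ∨ (x ∈ V₂ ∧ y ∈ V₁))
  | order {V₁ V₂ : Finset ℕ} {A₁ A₂ : ℕ → ℕ → Prop} :
      Disjoint V₁ V₂ → DCo V₁ A₁ → DCo V₂ A₂ →
      DCo (V₁ ∪ V₂) (fun x y => A₁ x y ∨ A₂ x y ∨ (x ∈ V₁ ∧ y ∈ V₂))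

/-- Extended directed co-graphs: additionally closed under directed union. -/
inductive ExtDCo : Finset ℕ → (ℕ → ℕ → Prop) → Prop
  | single (v : ℕ) : ExtDCo {v} (fun _ _ => False)
  | union {V₁ V₂ : Finset ℕ} {A₁ A₂ : ℕ → ℕ → Prop} :
      Disjoint V₁ V₂ → ExtDCo V₁ A₁ → ExtDCo V₂ A₂ →
      ExtDCo (V₁ ∪ V₂) (fun x y => A₁ x y ∨ A₂ x y)
  | series {V₁ V₂ : Finset ℕ} {A₁ A₂ : ℕ → ℕ → Prop} :
      Disjoint V₁ V₂ → ExtDCo V₁ A₁ → ExtDCo V₂ A₂ →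
      ExtDCo (V₁ ∪ V₂)
        (fun x y => A₁ x y ∨ A₂ x y ∨ (x ∈ V₁ ∧ y ∈ V₂) ∨ (x ∈ V₂ ∧ y ∈ V₁))
  | order {V₁ V₂ : Finset ℕ} {A₁ A₂ : ℕ → ℕ → Prop} :
      Disjoint V₁ V₂ → ExtDCo V₁ A₁ → ExtDCo V₂ A₂ →
      ExtDCo (V₁ ∪ V₂) (fun x y => A₁ x y ∨ A₂ x y ∨ (x ∈ V₁ ∧ y ∈ V₂))
  | dUnion {V₁ V₂ : Finset ℕ} {A₁ A₂ : ℕ → ℕ → Prop} (R : ℕ → ℕ → Prop) :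
      Disjoint V₁ V₂ → ExtDCo V₁ A₁ → ExtDCo V₂ A₂ →
      ExtDCo (V₁ ∪ V₂) (fun x y => A₁ x y ∨ A₂ x y ∨ (x ∈ V₁ ∧ y ∈ V₂ ∧ R x y))

/-- Digraphs constructible from single vertices by disjoint union and adding directed twins. -/
inductive TwinBuilt : Finset ℕ → (ℕ → ℕ → Prop) → Prop
  | single (v : ℕ) : TwinBuilt {v} (fun _ _ => False)
  | union {V₁ V₂ : Finset ℕ} {A₁ A₂ : ℕ → ℕ → Prop} :
      Disjoint V₁ V₂ → TwinBuilt V₁ A₁ → TwinBuilt V₂ A₂ →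
      TwinBuilt (V₁ ∪ V₂) (fun x y => A₁ x y ∨ A₂ x y)
  | twin {V : Finset ℕ} {A : ℕ → ℕ → Prop} (v u : ℕ) (auv avu : Prop) :
      v ∈ V → u ∉ V → TwinBuilt V A →
      TwinBuilt (insert u V) (twinArc A v u auv avu)

/-- Twin-distance-hereditary digraphs: built from a single vertex by disjoint union,
adding directed twins, and adding pendant plus / pendant minus vertices. -/
inductive TwinDH : Finset ℕ → (ℕ → ℕ → Prop) → Prop
  | single (v : ℕ) : TwinDH {v} (fun _ _ => False)
  | union {V₁ V₂ : Finset ℕ} {A₁ A₂ : ℕ → ℕ → Prop} :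
      Disjoint V₁ V₂ → TwinDH V₁ A₁ → TwinDH V₂ A₂ →
      TwinDH (V₁ ∪ V₂) (fun x y => A₁ x y ∨ A₂ x y)
  | twin {V : Finset ℕ} {A : ℕ → ℕ → Prop} (v u : ℕ) (auv avu : Prop) :
      v ∈ V → u ∉ V → TwinDH V A →
      TwinDH (insert u V) (twinArc A v u auv avu)
  | pendPlus {V : Finset ℕ} {A : ℕ → ℕ → Prop} (a u : ℕ) :
      a ∈ V → u ∉ V → TwinDH V A →
      TwinDH (insert u V) (fun x y => A x y ∨ (x = u ∧ y = a))
  | pendMinus {V : Finset ℕ} {A : ℕ → ℕ → Prop} (a u : ℕ) :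
      a ∈ V → u ∉ V → TwinDH V A →
      TwinDH (insert u V) (fun x y => A x y ∨ (x = a ∧ y = u))

/-- Undirected distance-hereditary graphs, via the recursive characterization:
built from a single vertex by pendant vertices, false twins and true twins. -/
inductive UDH : Finset ℕ → (ℕ → ℕ → Prop) → Prop
  | single (v : ℕ) : UDH {v} (fun _ _ => False)
  | pendant {V : Finset ℕ} {E : ℕ → ℕ → Prop} (a u : ℕ) :
      a ∈ V → u ∉ V → UDH V E →
      UDH (insert u V) (fun x y => E x y ∨ (x = u ∧ y = a) ∨ (x = a ∧ y = u))
  | falseTwin {V : Finset ℕ} {E : ℕ → ℕ → Prop} (v u : ℕ) :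
      v ∈ V → u ∉ V → UDH V E →
      UDH (insert u V) (fun x y => E x y ∨ (x = u ∧ E v y) ∨ (y = u ∧ E x v))
  | trueTwin {V : Finset ℕ} {E : ℕ → ℕ → Prop} (v u : ℕ) :
      v ∈ V → u ∉ V → UDH V E →
      UDH (insert u V)
        (fun x y => E x y ∨ (x = u ∧ E v y) ∨ (y = u ∧ E x v) ∨
          (x = u ∧ y = v) ∨ (x = v ∧ y = u))

/-- The induced subdigraph on `C` is strongly connected. -/
def StronglyConn (A : ℕ → ℕ → Prop) (C : Finset ℕ) : Prop :=
  ∀ u ∈ C, ∀ v ∈ C, Reach (restrict A C) u v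

/-- `C` is a strong component of the digraph with vertex set `V` and arcs `A`. -/
def IsStrongComponent (A : ℕ → ℕ → Prop) (V C : Finset ℕ) : Prop :=
  C.Nonempty ∧ C ⊆ V ∧ StronglyConn A C ∧
    ∀ D, C ⊆ D → D ⊆ V → StronglyConn A D → D = C

/-- The induced subdigraph on `S` is weakly connected. -/
def WeaklyConn (A : ℕ → ℕ → Prop) (S : Finset ℕ) : Prop :=
  S.Nonempty ∧ ∀ u ∈ S, ∀ v ∈ S,
    Relation.ReflTransGen (fun x y => restrict A S x y ∨ restrict A S y x) u v

/-- The induced subdigraph on `V` is acyclic. -/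
def AcyclicOn (A : ℕ → ℕ → Prop) (V : Finset ℕ) : Prop :=
  ∀ v ∈ V, ∀ n, 0 < n → ¬ walkLen (restrict A V) n v v

/-- `CRle A V r`: the cycle rank of the digraph `(V, A)` is at most `r`.
This is the standard recursive definition: acyclic digraphs have rank 0, digraphs
decompose into their strong components, and deleting a vertex decreases rank by
at most one. -/
inductive CRle (A : ℕ → ℕ → Prop) : Finset ℕ → ℕ → Prop
  | base {V : Finset ℕ} {r : ℕ} : AcyclicOn A V → CRle A V r
  | scc {V : Finset ℕ} {r : ℕ} :
      (∀ C, IsStrongComponent A V C → CRle A C r) → CRle A V r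
  | step {V : Finset ℕ} {r : ℕ} (v : ℕ) :
      v ∈ V → CRle A (V.erase v) r → CRle A V (r + 1)

/-- The cycle rank of the digraph `(V, A)`. -/
noncomputable def cycleRank (A : ℕ → ℕ → Prop) (V : Finset ℕ) : ℕ :=
  sInf {r | CRle A V r}

/-- `CW k V A f`: the `k`-labeled digraph with vertices `V`, arcs `A` and labeling `f`
is constructible by a directed clique-width `k`-expression. -/
inductive CW (k : ℕ) : Finset ℕ → (ℕ → ℕ → Prop) → (ℕ → Fin k) → Prop
  | vertex (v : ℕ) (a : Fin k) : CW k {v} (fun _ _ => False) (fun _ => a)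
  | union {V₁ V₂ : Finset ℕ} {A₁ A₂ : ℕ → ℕ → Prop} {f₁ f₂ : ℕ → Fin k} :
      Disjoint V₁ V₂ → CW k V₁ A₁ f₁ → CW k V₂ A₂ f₂ →
      CW k (V₁ ∪ V₂) (fun x y => A₁ x y ∨ A₂ x y)
        (fun x => if x ∈ V₁ then f₁ x else f₂ x)
  | addArcs {V : Finset ℕ} {A : ℕ → ℕ → Prop} {f : ℕ → Fin k} (a b : Fin k) :
      a ≠ b → CW k V A f →
      CW k V (fun x y => A x y ∨ (x ∈ V ∧ y ∈ V ∧ f x = a ∧ f y = b)) f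
  | relabel {V : Finset ℕ} {A : ℕ → ℕ → Prop} {f : ℕ → Fin k} (a b : Fin k) :
      CW k V A f →
      CW k V A (fun x => if f x = a then b else f x)

/-!
Adding a directed twin `u` of `v` commutes with each composition (`u` joins the part containing
`v`), and a composition of two single vertices is itself the addition of a twin. By induction on
the composition tree, directed co-graphs are therefore closed under adding twins, and every
directed co-graph on at least two vertices arises from a smaller one by adding a twin.
-/

/-- Disjoint union, series and order composition are the cases `(p, q) = (False, False)`,
`(True, True)`, `(True, False)`; `(False, True)` is order composition with the parts swapped. -/
def composeArc (V₁ V₂ : Finset ℕ) (A₁ A₂ : ℕ → ℕ → Prop) (p q : Prop) : ℕ → ℕ → Prop :=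
  fun x y => A₁ x y ∨ A₂ x y ∨ (x ∈ V₁ ∧ y ∈ V₂ ∧ p) ∨ (x ∈ V₂ ∧ y ∈ V₁ ∧ q)

theorem composeArc_comm (V₁ V₂ : Finset ℕ) (A₁ A₂ : ℕ → ℕ → Prop) (p q : Prop) :
    composeArc V₁ V₂ A₁ A₂ p q = composeArc V₂ V₁ A₂ A₁ q p := by
  funext x y
  simp only [composeArc, eq_iff_iff]
  tauto

theorem composeArc_false_false (V₁ V₂ : Finset ℕ) (A₁ A₂ : ℕ → ℕ → Prop) :
    composeArc V₁ V₂ A₁ A₂ False False = fun x y => A₁ x y ∨ A₂ x y := by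
  funext x y
  simp [composeArc]

theorem composeArc_true_true (V₁ V₂ : Finset ℕ) (A₁ A₂ : ℕ → ℕ → Prop) :
    composeArc V₁ V₂ A₁ A₂ True True =
      fun x y => A₁ x y ∨ A₂ x y ∨ (x ∈ V₁ ∧ y ∈ V₂) ∨ (x ∈ V₂ ∧ y ∈ V₁) := by
  funext x y
  simp [composeArc]

theorem composeArc_true_false (V₁ V₂ : Finset ℕ) (A₁ A₂ : ℕ → ℕ → Prop) :
    composeArc V₁ V₂ A₁ A₂ True False = fun x y => A₁ x y ∨ A₂ x y ∨ (x ∈ V₁ ∧ y ∈ V₂) := by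
  funext x y
  simp [composeArc]

theorem twinArc_bot (v u : ℕ) (auv avu : Prop) :
    twinArc (fun _ _ => False) v u auv avu =
      composeArc {u} {v} (fun _ _ => False) (fun _ _ => False) auv avu := by
  funext x y
  simp [twinArc, composeArc]

theorem twinArc_composeArc {V₁ V₂ : Finset ℕ} {A₁ A₂ : ℕ → ℕ → Prop} {v : ℕ}
    (hv₁ : v ∈ V₁) (hv₂ : v ∉ V₂) (hA₂ : ∀ ⦃x y⦄, A₂ x y → x ∈ V₂ ∧ y ∈ V₂)
    (u : ℕ) (auv avu p q : Prop) :
    twinArc (composeArc V₁ V₂ A₁ A₂ p q) v u auv avu =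
      composeArc (insert u V₁) V₂ (twinArc A₁ v u auv avu) A₂ p q := by
  have hv_out : ∀ y, ¬ A₂ v y := fun y h => hv₂ (hA₂ h).1
  have hv_in : ∀ x, ¬ A₂ x v := fun x h => hv₂ (hA₂ h).2
  funext x y
  simp only [twinArc, composeArc, Finset.mem_insert]
  grind

def IsTwinExtensionOf (P : Finset ℕ → (ℕ → ℕ → Prop) → Prop) (V : Finset ℕ)
    (A : ℕ → ℕ → Prop) : Prop :=
  ∃ (V' : Finset ℕ) (A' : ℕ → ℕ → Prop) (v u : ℕ) (auv avu : Prop),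
    P V' A' ∧ v ∈ V' ∧ u ∉ V' ∧ V = insert u V' ∧ A = twinArc A' v u auv avu

namespace DCo

variable {V V₁ V₂ : Finset ℕ} {A A₁ A₂ : ℕ → ℕ → Prop} {v u : ℕ} {auv avu : Prop}

theorem mem_of_arc (h : DCo V A) : ∀ ⦃x y⦄, A x y → x ∈ V ∧ y ∈ V := by
  induction h with
  | single _ => exact fun _ _ => False.elim
  | union _ _ _ ih₁ ih₂ | series _ _ _ ih₁ ih₂ | order _ _ _ ih₁ ih₂ =>
    intro x y hxy
    simp only [Finset.mem_union]
    grind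

theorem compose (hd : Disjoint V₁ V₂) (h₁ : DCo V₁ A₁) (h₂ : DCo V₂ A₂) (p q : Prop) :
    DCo (V₁ ∪ V₂) (composeArc V₁ V₂ A₁ A₂ p q) := by
  by_cases hp : p <;> by_cases hq : q <;> simp only [eq_true, hp, hq]
  · exact composeArc_true_true V₁ V₂ A₁ A₂ ▸ h₁.series hd h₂
  · exact composeArc_true_false V₁ V₂ A₁ A₂ ▸ h₁.order hd h₂
  · rw [composeArc_comm, Finset.union_comm, composeArc_true_false]
    exact h₂.order hd.symm h₁
  · exact composeArc_false_false V₁ V₂ A₁ A₂ ▸ h₁.union hd h₂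

theorem compose_induction {motive : (V : Finset ℕ) → (A : ℕ → ℕ → Prop) → DCo V A → Prop}
    (single : ∀ v, motive {v} (fun _ _ => False) (single v))
    (compose : ∀ {V₁ V₂ : Finset ℕ} {A₁ A₂ : ℕ → ℕ → Prop} (p q : Prop) (hd : Disjoint V₁ V₂)
      (h₁ : DCo V₁ A₁) (h₂ : DCo V₂ A₂), motive V₁ A₁ h₁ → motive V₂ A₂ h₂ →
      motive (V₁ ∪ V₂) (composeArc V₁ V₂ A₁ A₂ p q) (h₁.compose hd h₂ p q))
    (h : DCo V A) : motive V A h := by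
  induction h with
  | single v => exact single v
  | union hd h₁ h₂ ih₁ ih₂ =>
    convert compose False False hd h₁ h₂ ih₁ ih₂ using 1
    exact (composeArc_false_false _ _ _ _).symm
  | series hd h₁ h₂ ih₁ ih₂ =>
    convert compose True True hd h₁ h₂ ih₁ ih₂ using 1
    exact (composeArc_true_true _ _ _ _).symm
  | order hd h₁ h₂ ih₁ ih₂ =>
    convert compose True False hd h₁ h₂ ih₁ ih₂ using 1
    exact (composeArc_true_false _ _ _ _).symm

theorem twinArc_composeArc_left (h₁ : DCo (insert u V₁) (twinArc A₁ v u auv avu))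
    (hd : Disjoint V₁ V₂) (h₂ : DCo V₂ A₂) (hv : v ∈ V₁) (hu : u ∉ V₂) (p q : Prop) :
    DCo (insert u (V₁ ∪ V₂)) (twinArc (composeArc V₁ V₂ A₁ A₂ p q) v u auv avu) := by
  rw [twinArc_composeArc hv (Finset.disjoint_left.mp hd hv) h₂.mem_of_arc, ← Finset.insert_union]
  exact h₁.compose (Finset.disjoint_insert_left.mpr ⟨hu, hd⟩) h₂ p q

theorem twin (h : DCo V A) (auv avu : Prop) (hv : v ∈ V) (hu : u ∉ V) :
    DCo (insert u V) (twinArc A v u auv avu) := by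
  induction h using DCo.compose_induction generalizing v with
  | single w =>
    rw [Finset.mem_singleton.mp hv, twinArc_bot, Finset.insert_eq]
    exact (single u).compose (Finset.disjoint_singleton.mpr (by simpa using hu)) (single w) _ _
  | compose p q hd h₁ h₂ ih₁ ih₂ =>
    simp only [Finset.mem_union, not_or] at hv hu
    rcases hv with hv | hv
    · exact (ih₁ hv hu.1).twinArc_composeArc_left hd h₂ hv hu.2 p q
    · rw [composeArc_comm, Finset.union_comm]
      exact (ih₂ hv hu.2).twinArc_composeArc_left hd.symm h₁ hv hu.1 q p

end DCo

theorem IsTwinExtensionOf.composeArc_left {V₁ V₂ : Finset ℕ} {A₁ A₂ : ℕ → ℕ → Prop}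
    (h₁ : IsTwinExtensionOf DCo V₁ A₁) (hd : Disjoint V₁ V₂) (h₂ : DCo V₂ A₂) (p q : Prop) :
    IsTwinExtensionOf DCo (V₁ ∪ V₂) (composeArc V₁ V₂ A₁ A₂ p q) := by
  obtain ⟨V', A', v, u, auv, avu, h', hv, hu, rfl, rfl⟩ := h₁
  have hd' : Disjoint V' V₂ := Finset.disjoint_of_subset_left (Finset.subset_insert u V') hd
  have hu₂ : u ∉ V₂ := Finset.disjoint_left.mp hd (Finset.mem_insert_self u V')
  exact ⟨V' ∪ V₂, composeArc V' V₂ A' A₂ p q, v, u, auv, avu, h'.compose hd' h₂ p q,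
    Finset.mem_union_left _ hv, by simp [hu, hu₂], Finset.insert_union u V' V₂,
    (twinArc_composeArc hv (Finset.disjoint_left.mp hd' hv) h₂.mem_of_arc u auv avu p q).symm⟩

theorem DCo.eq_singleton_or_isTwinExtensionOf {V : Finset ℕ} {A : ℕ → ℕ → Prop} (h : DCo V A) :
    (∃ v, V = {v} ∧ A = fun _ _ => False) ∨ IsTwinExtensionOf DCo V A := by
  induction h using DCo.compose_induction with
  | single v => exact Or.inl ⟨v, rfl, rfl⟩
  | compose p q hd h₁ h₂ ih₁ ih₂ =>
    right
    rcases ih₁ with ⟨a, rfl, rfl⟩ | ih₁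
    · rcases ih₂ with ⟨b, rfl, rfl⟩ | ih₂
      · exact ⟨{b}, _, b, a, p, q, single b, Finset.mem_singleton_self b,
          by simpa using Finset.disjoint_singleton.mp hd, (Finset.insert_eq a {b}).symm,
          (twinArc_bot b a p q).symm⟩
      · rw [composeArc_comm, Finset.union_comm]
        exact ih₂.composeArc_left hd.symm h₁ q p
    · exact ih₁.composeArc_left hd h₂ p q

theorem TwinBuilt.dCo {V : Finset ℕ} {A : ℕ → ℕ → Prop} (h : TwinBuilt V A) : DCo V A := by
  induction h with
  | single v => exact DCo.single v
  | union hd _ _ ih₁ ih₂ => exact ih₁.union hd ih₂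
  | twin v u auv avu hv hu _ ih => exact ih.twin auv avu hv hu

theorem DCo.twinBuilt {V : Finset ℕ} {A : ℕ → ℕ → Prop} (h : DCo V A) : TwinBuilt V A := by
  induction hn : V.card using Nat.strong_induction_on generalizing V A with
  | _ n ih =>
    rcases h.eq_singleton_or_isTwinExtensionOf with
      ⟨v, rfl, rfl⟩ | ⟨V', A', v, u, auv, avu, h', hv, hu, rfl, rfl⟩
    · exact .single v
    · exact .twin v u auv avu hv hu
        (ih _ (hn ▸ Finset.card_lt_card (Finset.ssubset_insert hu)) h' rfl)

theorem stmt_1 (V : Finset ℕ) (A : ℕ → ℕ → Prop) :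
    DCo V A ↔ TwinBuilt V A :=
  ⟨DCo.twinBuilt, TwinBuilt.dCo⟩
end

section
/- A twin-distance-hereditary digraph contains no induced directed 3-cycle (three vertices a, b, c with arcs exactly (a,b), (b,c), (c,a) among them). -/
/-!
Induct on the construction. A triangle of a disjoint union lies in one part, since its arcs do.
A pendant vertex has in-degree or out-degree zero, so it lies on no directed cycle. A new twin `u`
of `v` cannot lie on a triangle together with `v`, and on a triangle without `v` it can be
replaced by `v`. In each case the triangle survives in the smaller digraph.
-/

def InducedC3 (A : ℕ → ℕ → Prop) (a b c : ℕ) : Prop :=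
  a ≠ b ∧ b ≠ c ∧ a ≠ c ∧ A a b ∧ A b c ∧ A c a ∧ ¬ A b a ∧ ¬ A c b ∧ ¬ A a c

namespace InducedC3

variable {A B : ℕ → ℕ → Prop} {a b c u : ℕ}

theorem rotate (h : InducedC3 A a b c) : InducedC3 A b c a := by
  obtain ⟨hab, hbc, hac, h1, h2, h3, h4, h5, h6⟩ := h
  exact ⟨hbc, hac.symm, hab.symm, h2, h3, h1, h5, h6, h4⟩

theorem of_agreeOn (S : Set ℕ) (hAB : ∀ x ∈ S, ∀ y ∈ S, (A x y ↔ B x y))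
    (ha : a ∈ S) (hb : b ∈ S) (hc : c ∈ S) (h : InducedC3 A a b c) : InducedC3 B a b c := by
  unfold InducedC3 at h ⊢
  rwa [← hAB a ha b hb, ← hAB b hb c hc, ← hAB c hc a ha, ← hAB b hb a ha, ← hAB c hc b hb,
    ← hAB a ha c hc]

theorem of_agree_off (hAB : ∀ x y, x ≠ u → y ≠ u → (A x y ↔ B x y))
    (ha : a ≠ u) (hb : b ≠ u) (hc : c ≠ u) (h : InducedC3 A a b c) : InducedC3 B a b c :=
  h.of_agreeOn {x | x ≠ u} (fun x hx y hy => hAB x y hx hy) ha hb hc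

theorem ne_of_forall_not_arc_to (hu : ∀ w, ¬ A w u) (h : InducedC3 A a b c) :
    a ≠ u ∧ b ≠ u ∧ c ≠ u := by
  obtain ⟨-, -, -, hab, hbc, hca, -⟩ := h
  exact ⟨fun e => hu c (e ▸ hca), fun e => hu a (e ▸ hab), fun e => hu b (e ▸ hbc)⟩

theorem ne_of_forall_not_arc_from (hu : ∀ w, ¬ A u w) (h : InducedC3 A a b c) :
    a ≠ u ∧ b ≠ u ∧ c ≠ u := by
  obtain ⟨-, -, -, hab, hbc, hca, -⟩ := h
  exact ⟨fun e => hu b (e ▸ hab), fun e => hu c (e ▸ hbc), fun e => hu a (e ▸ hca)⟩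

theorem of_disjoint_sup {A₁ A₂ : ℕ → ℕ → Prop} {V₁ : Set ℕ}
    (hA₁ : ∀ x y, A₁ x y → x ∈ V₁ ∧ y ∈ V₁) (hA₂ : ∀ x y, A₂ x y → x ∉ V₁)
    (hB : ∀ x y, B x y ↔ A₁ x y ∨ A₂ x y) (h : InducedC3 B a b c) (hab : A₁ a b) :
    InducedC3 A₁ a b c := by
  obtain ⟨ha, hb⟩ := hA₁ a b hab
  have hB₁ : ∀ x ∈ V₁, ∀ y, B x y ↔ A₁ x y := fun x hx y =>
    (hB x y).trans (or_iff_left fun h => hA₂ x y h hx)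
  have hbc : A₁ b c := (hB₁ b hb c).1 h.2.2.2.2.1
  exact h.of_agreeOn V₁ (fun x hx y _ => hB₁ x hx y) ha hb (hA₁ b c hbc).2

end InducedC3

theorem DTwins.inducedC3_swap {A : ℕ → ℕ → Prop} {u v b c : ℕ} (ht : DTwins A u v)
    (h : InducedC3 A u b c) : InducedC3 A v b c := by
  obtain ⟨huv, hin, hout⟩ := ht
  have arc_to : ∀ w, w ≠ u → w ≠ v → (A w u ↔ A w v) := fun w hwu hwv => by
    simpa [hwu, hwv] using congrArg (w ∈ ·) hin
  have arc_from : ∀ w, w ≠ u → w ≠ v → (A u w ↔ A v w) := fun w hwu hwv => by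
    simpa [hwu, hwv] using congrArg (w ∈ ·) hout
  obtain ⟨hub, hbc, huc, hub', hbc', hcu, hbu, hcb, huc'⟩ := h
  have hbv : b ≠ v := by
    rintro rfl
    exact hcb ((arc_to c huc.symm hbc.symm).1 hcu)
  have hcv : c ≠ v := by
    rintro rfl
    exact hcb ((arc_from b hub.symm hbc).1 hub')
  exact ⟨hbv.symm, hbc, hcv.symm, (arc_from b hub.symm hbv).1 hub', hbc',
    (arc_to c huc.symm hcv).1 hcu, mt (arc_to b hub.symm hbv).2 hbu, hcb,
    mt (arc_from c huc.symm hcv).2 huc'⟩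

theorem DTwins.exists_inducedC3_avoiding {A : ℕ → ℕ → Prop} {u v a b c : ℕ} (ht : DTwins A u v)
    (h : InducedC3 A a b c) : ∃ a' b' c', InducedC3 A a' b' c' ∧ a' ≠ u ∧ b' ≠ u ∧ c' ≠ u := by
  have through_u : ∀ {b c}, InducedC3 A u b c → ∃ a' b' c', InducedC3 A a' b' c' ∧
      a' ≠ u ∧ b' ≠ u ∧ c' ≠ u := fun h =>
    ⟨v, _, _, ht.inducedC3_swap h, ht.1.symm, h.1.symm, h.2.2.1.symm⟩
  by_cases ha : a = u
  · exact through_u (ha ▸ h)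
  by_cases hb : b = u
  · exact through_u (hb ▸ h.rotate)
  by_cases hc : c = u
  · exact through_u (hc ▸ h.rotate.rotate)
  exact ⟨a, b, c, h, ha, hb, hc⟩

namespace TwinDH

variable {V : Finset ℕ} {A : ℕ → ℕ → Prop}

theorem mem_of_arc (h : TwinDH V A) {x y : ℕ} (hxy : A x y) : x ∈ V ∧ y ∈ V := by
  induction h generalizing x y with
  | single v => exact hxy.elim
  | union _ _ _ ih₁ ih₂ =>
    rcases hxy with hxy | hxy
    · exact (ih₁ hxy).imp (Finset.mem_union_left _) (Finset.mem_union_left _)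
    · exact (ih₂ hxy).imp (Finset.mem_union_right _) (Finset.mem_union_right _)
  | twin v u auv avu hv hu _ ih =>
    rcases hxy with hxy | ⟨rfl, rfl, -⟩ | ⟨rfl, rfl, -⟩ | ⟨rfl, hxy⟩ | ⟨rfl, hxy⟩
    · exact (ih hxy).imp Finset.mem_insert_of_mem Finset.mem_insert_of_mem
    · exact ⟨Finset.mem_insert_self _ _, Finset.mem_insert_of_mem hv⟩
    · exact ⟨Finset.mem_insert_of_mem hv, Finset.mem_insert_self _ _⟩
    · exact ⟨Finset.mem_insert_self _ _, Finset.mem_insert_of_mem (ih hxy).2⟩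
    · exact ⟨Finset.mem_insert_of_mem (ih hxy).1, Finset.mem_insert_self _ _⟩
  | pendPlus a u ha hu _ ih =>
    rcases hxy with hxy | ⟨rfl, rfl⟩
    · exact (ih hxy).imp Finset.mem_insert_of_mem Finset.mem_insert_of_mem
    · exact ⟨Finset.mem_insert_self _ _, Finset.mem_insert_of_mem ha⟩
  | pendMinus a u ha hu _ ih =>
    rcases hxy with hxy | ⟨rfl, rfl⟩
    · exact (ih hxy).imp Finset.mem_insert_of_mem Finset.mem_insert_of_mem
    · exact ⟨Finset.mem_insert_of_mem ha, Finset.mem_insert_self _ _⟩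

theorem irrefl (h : TwinDH V A) (x : ℕ) : ¬ A x x := by
  induction h generalizing x with
  | single v => exact id
  | union _ _ _ ih₁ ih₂ => exact not_or_intro (ih₁ x) (ih₂ x)
  | twin v u auv avu hv hu hA ih =>
    rintro (hxx | ⟨rfl, rfl, -⟩ | ⟨rfl, rfl, -⟩ | ⟨rfl, hxx⟩ | ⟨rfl, hxx⟩)
    · exact ih x hxx
    · exact hu hv
    · exact hu hv
    · exact hu (hA.mem_of_arc hxx).2
    · exact hu (hA.mem_of_arc hxx).1
  | pendPlus a u ha hu _ ih =>
    rintro (hxx | ⟨rfl, rfl⟩)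
    · exact ih x hxx
    · exact hu ha
  | pendMinus a u ha hu _ ih =>
    rintro (hxx | ⟨rfl, rfl⟩)
    · exact ih x hxx
    · exact hu ha

theorem dTwins_twinArc (h : TwinDH V A) {v u : ℕ} (auv avu : Prop) (hv : v ∈ V) (hu : u ∉ V) :
    DTwins (twinArc A v u auv avu) u v := by
  have huv : u ≠ v := fun e => hu (e ▸ hv)
  -- `DTwins` only discounts the arcs between `u` and `v`, so a loop at `v` would break it.
  have no_arc_to : ∀ w, ¬ A w u := fun w hw => hu (h.mem_of_arc hw).2
  have no_arc_from : ∀ w, ¬ A u w := fun w hw => hu (h.mem_of_arc hw).1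
  refine ⟨huv, ?_, ?_⟩ <;> ext w <;> by_cases hwu : w = u <;> by_cases hwv : w = v <;>
    simp_all [twinArc, h.irrefl]

theorem not_inducedC3 (h : TwinDH V A) (a b c : ℕ) : ¬ InducedC3 A a b c := by
  induction h generalizing a b c with
  | single v => exact fun h => h.2.2.2.1
  | union hV hA₁ hA₂ ih₁ ih₂ =>
    intro h
    rcases h.2.2.2.1 with hab | hab
    · exact ih₁ a b c <| h.of_disjoint_sup (fun x y => hA₁.mem_of_arc)
        (fun x y hxy hx => Finset.disjoint_left.1 hV hx (hA₂.mem_of_arc hxy).1)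
        (fun x y => Iff.rfl) hab
    · exact ih₂ a b c <| h.of_disjoint_sup (fun x y => hA₂.mem_of_arc)
        (fun x y hxy hx => Finset.disjoint_right.1 hV hx (hA₁.mem_of_arc hxy).1)
        (fun x y => or_comm) hab
  | twin v u auv avu hv hu hA ih =>
    intro h
    obtain ⟨a', b', c', h', ha, hb, hc⟩ :=
      (hA.dTwins_twinArc auv avu hv hu).exists_inducedC3_avoiding h
    refine ih a' b' c' (h'.of_agree_off (fun x y hx hy => ?_) ha hb hc)
    simp [twinArc, hx, hy]
  | pendPlus a₀ u ha₀ hu hA ih =>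
    intro h
    obtain ⟨ha, hb, hc⟩ := h.ne_of_forall_not_arc_to fun w hw =>
      hw.elim (fun hw => hu (hA.mem_of_arc hw).2) fun hw => hu (hw.2 ▸ ha₀)
    exact ih a b c (h.of_agree_off (fun x y hx _ => by simp [hx]) ha hb hc)
  | pendMinus a₀ u ha₀ hu hA ih =>
    intro h
    obtain ⟨ha, hb, hc⟩ := h.ne_of_forall_not_arc_from fun w hw =>
      hw.elim (fun hw => hu (hA.mem_of_arc hw).1) fun hw => hu (hw.1 ▸ ha₀)
    exact ih a b c (h.of_agree_off (fun x y _ hy => by simp [hy]) ha hb hc)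

end TwinDH

theorem stmt_9 (V : Finset ℕ) (A : ℕ → ℕ → Prop) (h : TwinDH V A) :
    ¬ ∃ a b c : ℕ, a ∈ V ∧ b ∈ V ∧ c ∈ V ∧ a ≠ b ∧ b ≠ c ∧ a ≠ c ∧
      A a b ∧ A b c ∧ A c a ∧ ¬ A b a ∧ ¬ A c b ∧ ¬ A a c := by
  rintro ⟨a, b, c, -, -, -, habc⟩
  exact h.not_inducedC3 a b c habc
end
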